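/- With the lexicographic monomial order determined by Z_N > Y_N > X_N > ... > Z_1 > Y_1 > X_1, for 1 ≤ i_1 < ... < i_t ≤ N with t ≥ 3, the polynomial G_{{i_1,...,i_t}} has the form X_{i_1} Y_{i_2} ··· Y_{i_{t-1}} Z_{i_t} - Y_{i_1} X_{i_2} Y_{i_3} ··· Y_{i_{t-1}} Z_{i_t} + (lower order terms); in particular its leading monomial is X_{i_1} Y_{i_2} ··· Y_{i_{t-1}} Z_{i_t}. -/

import Mathlib

variable (K : Type) [Field K] (N : ℕ)

/-- Xᵢ in S = K[X₁,Y₁,Z₁,…]: the variable X (i,0). -/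
noncomputable def XX (i : Fin N) : MvPolynomial (Fin N × Fin 3) K := MvPolynomial.X (i, 0)
/-- Yᵢ: the variable X (i,1). -/
noncomputable def YY (i : Fin N) : MvPolynomial (Fin N × Fin 3) K := MvPolynomial.X (i, 1)
/-- Zᵢ: the variable X (i,2). -/
noncomputable def ZZ (i : Fin N) : MvPolynomial (Fin N × Fin 3) K := MvPolynomial.X (i, 2)

/-- G_{i,j} = XᵢZⱼ - YᵢYⱼ + ZᵢXⱼ. -/
noncomputable def Gpair (i j : Fin N) : MvPolynomial (Fin N × Fin 3) K :=
  XX K N i * ZZ K N j - YY K N i * YY K N j + ZZ K N i * XX K N j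

/-- The family F_I, indexed by (sorted) lists: F_{i}=Xᵢ, F_{i,j}=XᵢYⱼ-XⱼYᵢ, and for t ≥ 3
F_{i₁,…,i_t} = F_{i₂,i₄,…,i_t} G_{i₁,i₃} - F_{i₁,i₄,…,i_t} G_{i₂,i₃}. -/
noncomputable def FF : List (Fin N) → MvPolynomial (Fin N × Fin 3) K
  | [] => 0
  | [i] => XX K N i
  | [i, j] => XX K N i * YY K N j - XX K N j * YY K N i
  | i1 :: i2 :: i3 :: rest =>
      FF (i2 :: rest) * Gpair K N i1 i3 - FF (i1 :: rest) * Gpair K N i2 i3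
termination_by l => l.length

/-- The family G_I: G_{i,j} as above, G_{i,j,k} the 3×3 determinant, and for t ≥ 4
G_{i₁,…,i_t} = G_{i₂,i₄,…,i_t} G_{i₁,i₃} - G_{i₁,i₄,…,i_t} G_{i₂,i₃}. -/
noncomputable def GG : List (Fin N) → MvPolynomial (Fin N × Fin 3) K
  | [] => 0
  | [_] => 0
  | [i, j] => Gpair K N i j
  | [i, j, k] =>
      Matrix.det !![XX K N i, YY K N i, ZZ K N i;
                    XX K N j, YY K N j, ZZ K N j;
                    XX K N k, YY K N k, ZZ K N k]
  | i1 :: i2 :: i3 :: i4 :: rest =>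
      GG (i2 :: i4 :: rest) * Gpair K N i1 i3 - GG (i1 :: i4 :: rest) * Gpair K N i2 i3
termination_by l => l.length

/-- Rank of a variable in the order Z_N > Y_N > X_N > ⋯ > Z₁ > Y₁ > X₁:
higher rank = larger variable (coordinate 0 = X, 1 = Y, 2 = Z). -/
def rankVar {N : ℕ} (v : Fin N × Fin 3) : ℕ := 3 * (v.1 : ℕ) + (v.2 : ℕ)

/-- Lexicographic comparison of monomials (exponent vectors) for this variable order:
m is lower order than m' iff at the largest variable where they differ, m has the
smaller exponent. -/
def monLT {N : ℕ} (m m' : (Fin N × Fin 3) →₀ ℕ) : Prop :=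
  ∃ v : Fin N × Fin 3, m v < m' v ∧ ∀ w : Fin N × Fin 3, rankVar v < rankVar w → m w = m' w

/-- The exponent vector of the monomial Y_{i₁} ⋯ Y_{i_t} for a list of indices. -/
noncomputable def Ymon {N : ℕ} (l : List (Fin N)) : (Fin N × Fin 3) →₀ ℕ :=
  (l.map (fun i => Finsupp.single ((i, 1) : Fin N × Fin 3) 1)).sum
/-!
Induct along `G_{a,c,m,…,b} = G_{c,…,b} G_{a,m} - G_{a,…,b} G_{c,m}`. For every `G_{i,…,b}` with
`t ≥ 2` the monomial `X_i Y_⋯ Z_b` is leading, and each other monomial is lex-below it at a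
variable of index larger than every index of the list except `i`. In the recursion the leading
terms `X_a X_c Z_m Y_⋯ Z_b` of the two products cancel, `X_a Y_c Y_m ⋯` and `-Y_a X_c Y_m ⋯` come
from the `Y Y` terms of `G_{c,m}` and `G_{a,m}`, and every remaining monomial is either
`(Z_a X_c or X_a Z_c) X_m Y_⋯ Z_b`, smaller at `Y_m`, or a non-leading monomial of `G_{c,…,b}`
or `G_{a,…,b}` times a monomial of `G_{·,m}`. The latter factor involves only variables of index
`≤ m`, so it cannot overturn a comparison decided at an index above `m`.
-/

open MvPolynomial

section LexAbove

variable {N : ℕ}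

lemma rankVar_injective : Function.Injective (rankVar : Fin N × Fin 3 → ℕ) := by
  rintro ⟨i, j⟩ ⟨i', j'⟩ h
  simp only [rankVar] at h
  ext <;> simp only <;> omega

lemma rankVar_le_of_fst_le {i i' : Fin N} (h : i ≤ i') (j : Fin 3) :
    rankVar (i, j) ≤ rankVar (i', 2) := by
  simp only [rankVar]; omega

lemma rankVar_lt_of_fst_lt {i i' : Fin N} (h : i < i') (j j' : Fin 3) :
    rankVar (i, j) < rankVar (i', j') := by
  simp only [rankVar]; omega

def LexLtAbove (r : ℕ) (m m' : (Fin N × Fin 3) →₀ ℕ) : Prop :=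
  ∃ v, r < rankVar v ∧ m v < m' v ∧ ∀ w, rankVar v < rankVar w → m w = m' w

def VanishesAbove (r : ℕ) (m : (Fin N × Fin 3) →₀ ℕ) : Prop :=
  ∀ w, r < rankVar w → m w = 0

lemma VanishesAbove.single {r : ℕ} {v : Fin N × Fin 3} (hv : rankVar v ≤ r) (n : ℕ) :
    VanishesAbove r (Finsupp.single v n) :=
  fun w hw => Finsupp.single_eq_of_ne (fun h => by subst h; omega)

lemma VanishesAbove.add {r : ℕ} {e f : (Fin N × Fin 3) →₀ ℕ} (he : VanishesAbove r e)
    (hf : VanishesAbove r f) : VanishesAbove r (e + f) :=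
  fun w hw => by rw [Finsupp.add_apply, he w hw, hf w hw]

lemma VanishesAbove.add_left_apply_eq {r : ℕ} {e f : (Fin N × Fin 3) →₀ ℕ}
    (he : VanishesAbove r e) (hf : VanishesAbove r f) (u : (Fin N × Fin 3) →₀ ℕ) :
    ∀ w, r < rankVar w → (u + e) w = (u + f) w :=
  fun w hw => by rw [Finsupp.add_apply, Finsupp.add_apply, he w hw, hf w hw]

namespace LexLtAbove

variable {r : ℕ} {m m' m'' : (Fin N × Fin 3) →₀ ℕ}

lemma monLT (h : LexLtAbove r m m') : monLT m m' :=
  let ⟨v, _, hv, hw⟩ := h; ⟨v, hv, hw⟩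

lemma ne (h : LexLtAbove r m m') : m ≠ m' := by
  rintro rfl
  obtain ⟨v, -, hv, -⟩ := h
  exact lt_irrefl _ hv

lemma mono {r' : ℕ} (h : LexLtAbove r m m') (hr : r' ≤ r) : LexLtAbove r' m m' :=
  let ⟨v, hrv, hv, hw⟩ := h; ⟨v, hr.trans_lt hrv, hv, hw⟩

lemma trans (h : LexLtAbove r m m') (h' : LexLtAbove r m' m'') : LexLtAbove r m m'' := by
  obtain ⟨v, hrv, hv, hw⟩ := h
  obtain ⟨v', hrv', hv', hw'⟩ := h'
  rcases lt_trichotomy (rankVar v) (rankVar v') with hlt | heq | hgt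
  · exact ⟨v', hrv', hw v' hlt ▸ hv', fun w hvw => (hw w (hlt.trans hvw)).trans (hw' w hvw)⟩
  · obtain rfl := rankVar_injective heq
    exact ⟨v, hrv, hv.trans hv', fun w hvw => (hw w hvw).trans (hw' w hvw)⟩
  · exact ⟨v, hrv, hw' v hgt ▸ hv, fun w hvw => (hw w hvw).trans (hw' w (hgt.trans hvw))⟩

lemma add_left (h : LexLtAbove r m m') (u : (Fin N × Fin 3) →₀ ℕ) :
    LexLtAbove r (u + m) (u + m') := by
  obtain ⟨v, hrv, hv, hw⟩ := h
  refine ⟨v, hrv, ?_, fun w hvw => ?_⟩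
  · simpa only [Finsupp.add_apply] using Nat.add_lt_add_left hv (u v)
  · simp only [Finsupp.add_apply, hw w hvw]

lemma add_right (h : LexLtAbove r m m') (u : (Fin N × Fin 3) →₀ ℕ) :
    LexLtAbove r (m + u) (m' + u) := by
  simpa only [add_comm _ u] using h.add_left u

lemma add_of_vanishesAbove {e T : (Fin N × Fin 3) →₀ ℕ} (h : LexLtAbove r m m')
    (he : VanishesAbove r e) (hT : ∀ w, r < rankVar w → m' w = T w) :
    LexLtAbove r (m + e) T := by
  obtain ⟨v, hrv, hv, hw⟩ := h
  refine ⟨v, hrv, ?_, fun w hvw => ?_⟩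
  · rwa [Finsupp.add_apply, he v hrv, add_zero, ← hT v hrv]
  · rw [Finsupp.add_apply, he w (hrv.trans hvw), add_zero, hw w hvw, hT w (hrv.trans hvw)]

end LexLtAbove

lemma lexLtAbove_of_vanishesAbove {r : ℕ} {m m' : (Fin N × Fin 3) →₀ ℕ} (v : Fin N × Fin 3)
    (hr : r < rankVar v) (hv : m v < m' v) (hm : VanishesAbove (rankVar v) m)
    (hm' : VanishesAbove (rankVar v) m') : LexLtAbove r m m' :=
  ⟨v, hr, hv, fun w hw => (hm w hw).trans (hm' w hw).symm⟩

end LexAbove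

section SupportPred

variable {σ R : Type*} [CommRing R] {P : (σ →₀ ℕ) → Prop}

lemma forall_mem_support_monomial {s : σ →₀ ℕ} (hs : P s) (a : R) :
    ∀ m ∈ (monomial s a).support, P m := fun m hm => by
  rwa [Finset.mem_singleton.1 (support_monomial_subset hm)]

lemma forall_mem_support_add {p q : MvPolynomial σ R} (hp : ∀ m ∈ p.support, P m)
    (hq : ∀ m ∈ q.support, P m) : ∀ m ∈ (p + q).support, P m := fun m hm => by
  classical
  exact (Finset.mem_union.1 (support_add hm)).elim (hp m) (hq m)

lemma forall_mem_support_neg {p : MvPolynomial σ R} (hp : ∀ m ∈ p.support, P m) :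
    ∀ m ∈ (-p).support, P m := by
  rwa [support_neg]

lemma forall_mem_support_sub {p q : MvPolynomial σ R} (hp : ∀ m ∈ p.support, P m)
    (hq : ∀ m ∈ q.support, P m) : ∀ m ∈ (p - q).support, P m := by
  rw [sub_eq_add_neg]
  exact forall_mem_support_add hp (forall_mem_support_neg hq)

end SupportPred

section LeadingTerms

variable {N : ℕ} {R : Type*} [CommRing R]

lemma forall_mem_support_mul_lexLtAbove {r : ℕ} {p q : MvPolynomial (Fin N × Fin 3) R}
    {L T : (Fin N × Fin 3) →₀ ℕ} (hp : ∀ m ∈ p.support, LexLtAbove r m L)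
    (hq : ∀ m ∈ q.support, VanishesAbove r m) (hLT : ∀ w, r < rankVar w → L w = T w) :
    ∀ m ∈ (p * q).support, LexLtAbove r m T := fun m hm => by
  classical
  obtain ⟨mp, hmp, mq, hmq, rfl⟩ := Finset.mem_add.1 (support_mul p q hm)
  exact (hp mp hmp).add_of_vanishesAbove (hq mq hmq) hLT

def HasLeadingTerm (r : ℕ) (F : MvPolynomial (Fin N × Fin 3) R) (L : (Fin N × Fin 3) →₀ ℕ) :
    Prop :=
  ∀ m ∈ (F - monomial L 1).support, LexLtAbove r m L

def HasLeadingTerms (r : ℕ) (F : MvPolynomial (Fin N × Fin 3) R)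
    (L M : (Fin N × Fin 3) →₀ ℕ) : Prop :=
  ∀ m ∈ (F - monomial L 1 + monomial M 1).support, LexLtAbove r m M

variable {r : ℕ} {F : MvPolynomial (Fin N × Fin 3) R} {L M : (Fin N × Fin 3) →₀ ℕ}

lemma HasLeadingTerms.hasLeadingTerm {r' : ℕ} (h : HasLeadingTerms r F L M)
    (hML : LexLtAbove r' M L) (hr : r' ≤ r) : HasLeadingTerm r' F L := by
  intro m hm
  rw [← add_sub_cancel_right (F - monomial L 1) (monomial M 1)] at hm
  exact forall_mem_support_sub (fun m hm => ((h m hm).mono hr).trans hML)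
    (forall_mem_support_monomial (P := (LexLtAbove r' · L)) hML 1) m hm

lemma HasLeadingTerm.coeff_eq_one (h : HasLeadingTerm r F L) : coeff L F = 1 := by
  have hL : coeff L (F - monomial L 1) = 0 :=
    notMem_support_iff.1 fun hL => (h L hL).ne rfl
  rwa [coeff_sub, coeff_monomial, if_pos rfl, sub_eq_zero] at hL

lemma HasLeadingTerms.coeff_eq_neg_one (h : HasLeadingTerms r F L M) (hML : M ≠ L) :
    coeff M F = -1 := by
  have hM : coeff M (F - monomial L 1 + monomial M 1) = 0 :=
    notMem_support_iff.1 fun hM => (h M hM).ne rfl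
  rwa [coeff_add, coeff_sub, coeff_monomial, if_neg hML.symm, coeff_monomial, if_pos rfl,
    sub_zero, add_eq_zero_iff_eq_neg] at hM

lemma HasLeadingTerms.monLT_of_mem_support (h : HasLeadingTerms r F L M) {m}
    (hm : m ∈ F.support) (hmL : m ≠ L) (hmM : m ≠ M) : monLT m M := by
  refine (h m (mem_support_iff.2 ?_)).monLT
  rwa [coeff_add, coeff_sub, coeff_monomial, if_neg hmL.symm, coeff_monomial, if_neg hmM.symm,
    sub_zero, add_zero, ← mem_support_iff]

end LeadingTerms

section GGLeadingTerms

variable {K : Type} [Field K] {N : ℕ}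

noncomputable def leadExp (a : Fin N) (mid : List (Fin N)) (b : Fin N) :
    (Fin N × Fin 3) →₀ ℕ :=
  Finsupp.single (a, 0) 1 + Ymon mid + Finsupp.single (b, 2) 1

noncomputable def secondExp (a c : Fin N) (mid : List (Fin N)) (b : Fin N) :
    (Fin N × Fin 3) →₀ ℕ :=
  Finsupp.single (a, 1) 1 + Finsupp.single (c, 0) 1 + Ymon mid + Finsupp.single (b, 2) 1

lemma Ymon_nil : Ymon ([] : List (Fin N)) = 0 := rfl

lemma Ymon_cons (x : Fin N) (l : List (Fin N)) :
    Ymon (x :: l) = Finsupp.single (x, 1) 1 + Ymon l := by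
  simp [Ymon]

lemma leadExp_cons (a c b : Fin N) (mid : List (Fin N)) :
    leadExp a (c :: mid) b = Finsupp.single (a, 0) 1 + Finsupp.single (c, 1) 1 + Ymon mid
      + Finsupp.single (b, 2) 1 := by
  simp only [leadExp, Ymon_cons, add_assoc]

lemma Gpair_eq (i j : Fin N) :
    Gpair K N i j = monomial (Finsupp.single (i, 0) 1 + Finsupp.single (j, 2) 1) 1
      - monomial (Finsupp.single (i, 1) 1 + Finsupp.single (j, 1) 1) 1
      + monomial (Finsupp.single (i, 2) 1 + Finsupp.single (j, 0) 1) 1 := by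
  simp only [Gpair, XX, YY, ZZ, monomial_add_single, ← X_pow_eq_monomial, pow_one]

lemma secondExp_lexLtAbove_leadExp {r : ℕ} {a c : Fin N} (mid : List (Fin N)) (b : Fin N)
    (hac : a < c) (hr : r < rankVar (c, 1)) :
    LexLtAbove r (secondExp a c mid b) (leadExp a (c :: mid) b) := by
  rw [leadExp_cons, secondExp, add_assoc _ (Ymon mid), add_assoc _ (Ymon mid)]
  refine (lexLtAbove_of_vanishesAbove (c, 1) hr ?_ ?_ ?_).add_right _
  · simp [hac.ne]
  all_goals refine .add (.single ?_ _) (.single ?_ _) <;> simp only [rankVar] <;> omega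

lemma vanishesAbove_of_mem_support_Gpair {i j : Fin N} (hij : i ≤ j) :
    ∀ g ∈ (Gpair K N i j).support, VanishesAbove (rankVar (j, 2)) g := by
  rw [Gpair_eq]
  refine forall_mem_support_add (forall_mem_support_sub ?_ ?_) ?_ <;>
    refine forall_mem_support_monomial (.add (.single ?_ _) (.single ?_ _)) _ <;>
    simp only [rankVar] <;> omega

lemma Gpair_hasLeadingTerm {r : ℕ} {i j : Fin N} (hij : i < j) (hr : r < rankVar (j, 2)) :
    HasLeadingTerm r (Gpair K N i j) (leadExp i [] j) := by
  have hG : Gpair K N i j - monomial (leadExp i [] j) 1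
      = monomial (Finsupp.single (i, 2) 1 + Finsupp.single (j, 0) 1) 1
        - monomial (Finsupp.single (i, 1) 1 + Finsupp.single (j, 1) 1) 1 := by
    rw [Gpair_eq, leadExp, Ymon_nil, add_zero]
    ring
  have key : ∀ e, e (j, 2) = 0 → VanishesAbove (rankVar (j, 2)) e →
      ∀ m ∈ (monomial e (1 : K)).support, LexLtAbove r m (leadExp i [] j) := by
    intro e he hv
    apply forall_mem_support_monomial
    refine lexLtAbove_of_vanishesAbove (j, 2) hr (by simp [leadExp, he]) hv ?_
    rw [leadExp, Ymon_nil, add_zero]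
    refine .add (.single ?_ _) (.single ?_ _) <;> simp only [rankVar] <;> omega
  rw [HasLeadingTerm, hG]
  refine forall_mem_support_sub (key _ ?_ ?_) (key _ ?_ ?_)
  · simp [hij.ne]
  · refine .add (.single ?_ _) (.single ?_ _) <;> simp only [rankVar] <;> omega
  · simp
  · refine .add (.single ?_ _) (.single ?_ _) <;> simp only [rankVar] <;> omega

lemma GG_triple_sub (a c b : Fin N) :
    GG K N [a, c, b] - monomial (leadExp a [c] b) 1 + monomial (secondExp a c [] b) 1
      = monomial (Finsupp.single (a, 2) 1 + Finsupp.single (c, 0) 1 + Finsupp.single (b, 1) 1) 1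
        + monomial (Finsupp.single (a, 1) 1 + Finsupp.single (c, 2) 1 + Finsupp.single (b, 0) 1) 1
        - monomial (Finsupp.single (a, 0) 1 + Finsupp.single (c, 2) 1 + Finsupp.single (b, 1) 1) 1
        - monomial (Finsupp.single (a, 2) 1 + Finsupp.single (c, 1) 1 + Finsupp.single (b, 0) 1) 1
      := by
  rw [GG.eq_4, Matrix.det_fin_three, leadExp_cons, secondExp, Ymon_nil]
  simp only [add_zero, monomial_add_single, ← X_pow_eq_monomial, pow_one, XX, YY, ZZ,
    Matrix.of_apply, Matrix.cons_val', Matrix.cons_val_zero, Matrix.cons_val_one,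
    Matrix.cons_val_two, Matrix.tail_cons, Matrix.empty_val',
    Matrix.cons_val_fin_one, Matrix.vecHead]
  ring

lemma GG_triple_hasLeadingTerms {a c b : Fin N} (hab : a < b) (hcb : c < b) :
    HasLeadingTerms (rankVar (c, 2)) (GG K N [a, c, b]) (leadExp a [c] b) (secondExp a c [] b) := by
  have key : ∀ e, e (b, 2) = 0 → VanishesAbove (rankVar (b, 2)) e →
      ∀ m ∈ (monomial e (1 : K)).support, LexLtAbove (rankVar (c, 2)) m (secondExp a c [] b) := by
    intro e he hv
    apply forall_mem_support_monomial
    refine lexLtAbove_of_vanishesAbove (b, 2) (rankVar_lt_of_fst_lt hcb 2 2)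
      (by simp [secondExp, he]) hv ?_
    rw [secondExp, Ymon_nil, add_zero]
    refine .add (.add (.single ?_ _) (.single ?_ _)) (.single ?_ _) <;>
      simp only [rankVar] <;> omega
  rw [HasLeadingTerms, GG_triple_sub]
  refine forall_mem_support_sub (forall_mem_support_sub (forall_mem_support_add
    (key _ ?_ ?_) (key _ ?_ ?_)) (key _ ?_ ?_)) (key _ ?_ ?_)
  all_goals first
    | simp [hab.ne, hcb.ne]
    | refine .add (.add (.single ?_ _) (.single ?_ _)) (.single ?_ _) <;>
        simp only [rankVar] <;> omega

lemma GG_cons_cons_cons (a c m : Fin N) {t : List (Fin N)} (ht : t ≠ []) :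
    GG K N (a :: c :: m :: t)
      = GG K N (c :: t) * Gpair K N a m - GG K N (a :: t) * Gpair K N c m := by
  obtain ⟨x, t, rfl⟩ := List.exists_cons_of_ne_nil ht
  exact GG.eq_5 K N a c m x t

lemma GG_cons_sub_eq (a c m b : Fin N) (mid : List (Fin N)) :
    GG K N (a :: c :: m :: (mid ++ [b])) - monomial (leadExp a (c :: m :: mid) b) 1
        + monomial (secondExp a c (m :: mid) b) 1
      = (GG K N (c :: (mid ++ [b])) - monomial (leadExp c mid b) 1) * Gpair K N a m
        - (GG K N (a :: (mid ++ [b])) - monomial (leadExp a mid b) 1) * Gpair K N c m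
        + monomial (Ymon mid + Finsupp.single (b, 2) 1 + (Finsupp.single (a, 2) 1
            + Finsupp.single (c, 0) 1 + Finsupp.single (m, 0) 1)) 1
        - monomial (Ymon mid + Finsupp.single (b, 2) 1 + (Finsupp.single (a, 0) 1
            + Finsupp.single (c, 2) 1 + Finsupp.single (m, 0) 1)) 1 := by
  have hmon : ∀ s t : (Fin N × Fin 3) →₀ ℕ,
      monomial (s + t) (1 : K) = monomial s 1 * monomial t 1 :=
    fun s t => by rw [monomial_mul, one_mul]
  rw [GG_cons_cons_cons a c m (by simp)]
  simp only [leadExp, secondExp, Ymon_cons, hmon, ← X_pow_eq_monomial, pow_one, Gpair, XX, YY, ZZ]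
  ring

lemma GG_cons_hasLeadingTerms {a c m b : Fin N} {mid : List (Fin N)} (ham : a < m) (hcm : c < m)
    (hP : HasLeadingTerm (rankVar (m, 2)) (GG K N (c :: (mid ++ [b]))) (leadExp c mid b))
    (hQ : HasLeadingTerm (rankVar (m, 2)) (GG K N (a :: (mid ++ [b]))) (leadExp a mid b)) :
    HasLeadingTerms (rankVar (c, 2)) (GG K N (a :: c :: m :: (mid ++ [b])))
      (leadExp a (c :: m :: mid) b) (secondExp a c (m :: mid) b) := by
  rw [HasLeadingTerms, GG_cons_sub_eq]
  generalize hU : Ymon mid + Finsupp.single (b, 2) 1 = U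
  have hLp : leadExp c mid b = U + Finsupp.single (c, 0) 1 := by rw [leadExp, ← hU]; abel
  have hLq : leadExp a mid b = U + Finsupp.single (a, 0) 1 := by rw [leadExp, ← hU]; abel
  have hM : secondExp a c (m :: mid) b = U + (Finsupp.single (a, 1) 1 + Finsupp.single (c, 0) 1
      + Finsupp.single (m, 1) 1) := by rw [secondExp, Ymon_cons, ← hU]; abel
  have hvan : ∀ i j, i ≤ m → VanishesAbove (rankVar (m, 2)) (Finsupp.single (i, j) 1) :=
    fun i j hi => .single (rankVar_le_of_fst_le hi j) 1
  have hvanM := ((hvan a 1 ham.le).add (hvan c 0 hcm.le)).add (hvan m 1 le_rfl)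
  refine forall_mem_support_sub (forall_mem_support_add (forall_mem_support_sub ?_ ?_) ?_) ?_
  · refine fun n hn => (forall_mem_support_mul_lexLtAbove hP
      (vanishesAbove_of_mem_support_Gpair ham.le) ?_ n hn).mono (rankVar_le_of_fst_le hcm.le 2)
    rw [hLp, hM]
    exact (hvan c 0 hcm.le).add_left_apply_eq hvanM U
  · refine fun n hn => (forall_mem_support_mul_lexLtAbove hQ
      (vanishesAbove_of_mem_support_Gpair hcm.le) ?_ n hn).mono (rankVar_le_of_fst_le hcm.le 2)
    rw [hLq, hM]
    exact (hvan a 0 ham.le).add_left_apply_eq hvanM U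
  all_goals
    apply forall_mem_support_monomial
    rw [hM]
    refine (lexLtAbove_of_vanishesAbove (m, 1) (rankVar_lt_of_fst_lt hcm 2 1) ?_ ?_ ?_).add_left U
    · simp [ham.ne]
    all_goals
      refine .add (.add (.single ?_ _) (.single ?_ _)) (.single ?_ _) <;>
        simp only [rankVar] <;> omega

lemma HasLeadingTerms.hasLeadingTerm_leadExp {F : MvPolynomial (Fin N × Fin 3) K}
    {a c b k : Fin N} {mid : List (Fin N)}
    (h : HasLeadingTerms (rankVar (c, 2)) F (leadExp a (c :: mid) b) (secondExp a c mid b))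
    (hac : a < c) (hkc : k < c) : HasLeadingTerm (rankVar (k, 2)) F (leadExp a (c :: mid) b) :=
  h.hasLeadingTerm (secondExp_lexLtAbove_leadExp mid b hac (rankVar_lt_of_fst_lt hkc 2 1))
    (rankVar_le_of_fst_le hkc.le 2)

lemma GG_cons_hasLeadingTerms_of_pairwise {a c m b : Fin N} {mid : List (Fin N)}
    (hl : (a :: c :: m :: (mid ++ [b])).Pairwise (· < ·))
    (ih : ∀ {i : Fin N}, (i :: (mid ++ [b])).Pairwise (· < ·) → (∀ x ∈ mid ++ [b], m < x) →
      HasLeadingTerm (rankVar (m, 2)) (GG K N (i :: (mid ++ [b]))) (leadExp i mid b)) :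
    HasLeadingTerms (rankVar (c, 2)) (GG K N (a :: c :: m :: (mid ++ [b])))
      (leadExp a (c :: m :: mid) b) (secondExp a c (m :: mid) b) := by
  simp only [List.pairwise_cons, List.mem_cons, forall_eq_or_imp] at hl
  obtain ⟨⟨-, ham, ha⟩, ⟨hcm, hc⟩, hm, hl⟩ := hl
  exact GG_cons_hasLeadingTerms ham hcm (ih (List.pairwise_cons.2 ⟨hc, hl⟩) hm)
    (ih (List.pairwise_cons.2 ⟨ha, hl⟩) hm)

theorem GG_hasLeadingTerm : ∀ (mid : List (Fin N)) {a b k : Fin N},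
    (a :: (mid ++ [b])).Pairwise (· < ·) → (∀ x ∈ mid ++ [b], k < x) →
    HasLeadingTerm (rankVar (k, 2)) (GG K N (a :: (mid ++ [b]))) (leadExp a mid b)
  | [], a, b, k, hl, hk => by
    rw [List.nil_append, GG.eq_3]
    exact Gpair_hasLeadingTerm (List.rel_of_pairwise_cons hl (by simp))
      (rankVar_lt_of_fst_lt (hk b (by simp)) 2 2)
  | [c], a, b, k, hl, hk => by
    have hac : a < c := List.rel_of_pairwise_cons hl (by simp)
    have hcb : c < b := List.rel_of_pairwise_cons (List.pairwise_cons.1 hl).2 (by simp)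
    exact (GG_triple_hasLeadingTerms (hac.trans hcb) hcb).hasLeadingTerm_leadExp hac
      (hk c (by simp))
  | c :: m :: mid, a, b, k, hl, hk =>
    (GG_cons_hasLeadingTerms_of_pairwise hl (GG_hasLeadingTerm mid)).hasLeadingTerm_leadExp
      (List.rel_of_pairwise_cons hl (by simp)) (hk c (by simp))

theorem GG_hasLeadingTerms {a c b : Fin N} :
    ∀ {mid : List (Fin N)}, (a :: c :: (mid ++ [b])).Pairwise (· < ·) →
      HasLeadingTerms (rankVar (c, 2)) (GG K N (a :: c :: (mid ++ [b]))) (leadExp a (c :: mid) b)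
        (secondExp a c mid b)
  | [], hl => GG_triple_hasLeadingTerms (List.rel_of_pairwise_cons hl (by simp))
      (List.rel_of_pairwise_cons (List.pairwise_cons.1 hl).2 (by simp))
  | _ :: mid, hl => GG_cons_hasLeadingTerms_of_pairwise hl (GG_hasLeadingTerm mid)

end GGLeadingTerms

theorem GG_leading_terms_general (K : Type) [Field K] (N : ℕ)
    (a c b : Fin N) (mid : List (Fin N))
    (hchain : (a :: c :: (mid ++ [b])).Chain' (· < ·)) :
    MvPolynomial.coeff
        (Finsupp.single ((a, 0) : Fin N × Fin 3) 1 + Finsupp.single ((c, 1) : Fin N × Fin 3) 1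
          + Ymon mid + Finsupp.single ((b, 2) : Fin N × Fin 3) 1)
        (GG K N (a :: c :: (mid ++ [b]))) = 1 ∧
    MvPolynomial.coeff
        (Finsupp.single ((a, 1) : Fin N × Fin 3) 1 + Finsupp.single ((c, 0) : Fin N × Fin 3) 1
          + Ymon mid + Finsupp.single ((b, 2) : Fin N × Fin 3) 1)
        (GG K N (a :: c :: (mid ++ [b]))) = -1 ∧
    monLT (Finsupp.single ((a, 1) : Fin N × Fin 3) 1 + Finsupp.single ((c, 0) : Fin N × Fin 3) 1
            + Ymon mid + Finsupp.single ((b, 2) : Fin N × Fin 3) 1)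
          (Finsupp.single ((a, 0) : Fin N × Fin 3) 1 + Finsupp.single ((c, 1) : Fin N × Fin 3) 1
            + Ymon mid + Finsupp.single ((b, 2) : Fin N × Fin 3) 1) ∧
    ∀ m ∈ (GG K N (a :: c :: (mid ++ [b]))).support,
      m ≠ Finsupp.single ((a, 0) : Fin N × Fin 3) 1 + Finsupp.single ((c, 1) : Fin N × Fin 3) 1
            + Ymon mid + Finsupp.single ((b, 2) : Fin N × Fin 3) 1 →
      m ≠ Finsupp.single ((a, 1) : Fin N × Fin 3) 1 + Finsupp.single ((c, 0) : Fin N × Fin 3) 1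
            + Ymon mid + Finsupp.single ((b, 2) : Fin N × Fin 3) 1 →
      monLT m (Finsupp.single ((a, 1) : Fin N × Fin 3) 1
                + Finsupp.single ((c, 0) : Fin N × Fin 3) 1 + Ymon mid
                + Finsupp.single ((b, 2) : Fin N × Fin 3) 1) := by
  have hl := List.isChain_iff_pairwise.1 hchain
  have hac : a < c := List.rel_of_pairwise_cons hl (by simp)
  have hML := secondExp_lexLtAbove_leadExp mid b hac (rankVar_lt_of_fst_lt hac 2 1)
  have hG := GG_hasLeadingTerms (K := K) hl
  rw [← leadExp_cons, ← secondExp]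
  exact ⟨(hG.hasLeadingTerm hML (rankVar_le_of_fst_le hac.le 2)).coeff_eq_one,
    hG.coeff_eq_neg_one hML.ne, hML.monLT, fun m hm hmL hmM => hG.monLT_of_mem_support hm hmL hmM⟩

/-- with the lex order Z_N > Y_N > X_N > ⋯ > Z₁ > Y₁ > X₁, for
i₁ < i₂ < ⋯ < i_t (t ≥ 3, here l = a :: c :: mid ++ [b]),
G_l = X_{i₁} Y_{i₂} ⋯ Y_{i_{t-1}} Z_{i_t} - Y_{i₁} X_{i₂} Y_{i₃} ⋯ Y_{i_{t-1}} Z_{i_t}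
+ lower order terms; in particular the leading monomial of G_l is
X_{i₁} Y_{i₂} ⋯ Y_{i_{t-1}} Z_{i_t}. -/
theorem GG_leading_terms (K : Type) [Field K] [CharZero K] (N : ℕ)
    (a c b : Fin N) (mid : List (Fin N))
    (hchain : (a :: c :: (mid ++ [b])).Chain' (· < ·)) :
    MvPolynomial.coeff
        (Finsupp.single ((a, 0) : Fin N × Fin 3) 1 + Finsupp.single ((c, 1) : Fin N × Fin 3) 1
          + Ymon mid + Finsupp.single ((b, 2) : Fin N × Fin 3) 1)
        (GG K N (a :: c :: (mid ++ [b]))) = 1 ∧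
    MvPolynomial.coeff
        (Finsupp.single ((a, 1) : Fin N × Fin 3) 1 + Finsupp.single ((c, 0) : Fin N × Fin 3) 1
          + Ymon mid + Finsupp.single ((b, 2) : Fin N × Fin 3) 1)
        (GG K N (a :: c :: (mid ++ [b]))) = -1 ∧
    monLT (Finsupp.single ((a, 1) : Fin N × Fin 3) 1 + Finsupp.single ((c, 0) : Fin N × Fin 3) 1
            + Ymon mid + Finsupp.single ((b, 2) : Fin N × Fin 3) 1)
          (Finsupp.single ((a, 0) : Fin N × Fin 3) 1 + Finsupp.single ((c, 1) : Fin N × Fin 3) 1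
            + Ymon mid + Finsupp.single ((b, 2) : Fin N × Fin 3) 1) ∧
    ∀ m ∈ (GG K N (a :: c :: (mid ++ [b]))).support,
      m ≠ Finsupp.single ((a, 0) : Fin N × Fin 3) 1 + Finsupp.single ((c, 1) : Fin N × Fin 3) 1
            + Ymon mid + Finsupp.single ((b, 2) : Fin N × Fin 3) 1 →
      m ≠ Finsupp.single ((a, 1) : Fin N × Fin 3) 1 + Finsupp.single ((c, 0) : Fin N × Fin 3) 1
            + Ymon mid + Finsupp.single ((b, 2) : Fin N × Fin 3) 1 →
      monLT m (Finsupp.single ((a, 1) : Fin N × Fin 3) 1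
                + Finsupp.single ((c, 0) : Fin N × Fin 3) 1 + Ymon mid
                + Finsupp.single ((b, 2) : Fin N × Fin 3) 1) :=
  GG_leading_terms_general K N a c b mid hchain
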